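/- arXiv:2206.03362 — 5 statements merged into one kernel-verified Lean document; each statement's English description precedes it below -/
import Mathlib

section
/- Sufficiency direction of Theorem 1 (weak learnability follows from a large robust margin): Let τ > 0 and suppose there exists a probability measure Q on Θ with marginrob(Q, S) ≥ τ; equivalently, for every (x, y) ∈ S, every δ ∈ B(ε) and every y' ≠ y one has Q({θ : c θ (x+δ) = y}) − Q({θ : c θ (x+δ) = y'}) ≥ τ. Then the margin weak-learning condition holds with constant τ: for every probability measure P' on S̃_aug × B(ε) there exists θ ∈ Θ such that E_{(x,y,y',δ)∼P'}[1[c θ (x+δ) = y]] ≥ E_{(x,y,y',δ)∼P'}[1[c θ (x+δ) = y']] + τ. -/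
/-!
Averaging over `θ ∼ Q` the gap `P'(c θ (x + δ) = y) - P'(c θ (x + δ) = y')` and exchanging the
order of integration turns it into the `P'`-average of the ensemble margin
`Q(c θ (x + δ) = y) - Q(c θ (x + δ) = y')`, which is at least `τ` on the support of `P'`.
A function whose mean is at least `τ` takes a value at least `τ` somewhere.
-/

open MeasureTheory ENNReal

theorem ENNReal.add_ofReal_le_iff_toReal {a b : ℝ≥0∞} (ha : a ≠ ∞) (hb : b ≠ ∞) {τ : ℝ}
    (hτ : 0 ≤ τ) : b + ENNReal.ofReal τ ≤ a ↔ b.toReal + τ ≤ a.toReal := by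
  rw [← ENNReal.toReal_le_toReal (add_ne_top.2 ⟨hb, ofReal_ne_top⟩) ha,
    toReal_add hb ofReal_ne_top, toReal_ofReal hτ]

theorem exists_measure_prodMk_add_le_of_ae {Θ X : Type*} [MeasurableSpace Θ] [MeasurableSpace X]
    (Q : Measure Θ) [IsProbabilityMeasure Q] (P : Measure X) [IsProbabilityMeasure P]
    {E F : Set (Θ × X)} (hE : MeasurableSet E) (hF : MeasurableSet F) (t : ℝ≥0∞)
    (h : ∀ᵐ x ∂P, Q ((·, x) ⁻¹' F) + t ≤ Q ((·, x) ⁻¹' E)) :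
    ∃ θ, P (Prod.mk θ ⁻¹' F) + t ≤ P (Prod.mk θ ⁻¹' E) := by
  have hmean : ∫⁻ θ, P (Prod.mk θ ⁻¹' F) + t ∂Q ≤ ∫⁻ θ, P (Prod.mk θ ⁻¹' E) ∂Q :=
    calc ∫⁻ θ, P (Prod.mk θ ⁻¹' F) + t ∂Q = Q.prod P F + t := by
          rw [lintegral_add_right _ measurable_const, Measure.prod_apply hF, lintegral_const,
            measure_univ, mul_one]
      _ = ∫⁻ x, Q ((·, x) ⁻¹' F) + t ∂P := by
          rw [lintegral_add_right _ measurable_const, Measure.prod_apply_symm hF, lintegral_const,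
            measure_univ, mul_one]
      _ ≤ ∫⁻ x, Q ((·, x) ⁻¹' E) ∂P := lintegral_mono_ae h
      _ = ∫⁻ θ, P (Prod.mk θ ⁻¹' E) ∂Q := by
          rw [← Measure.prod_apply_symm hE, Measure.prod_apply hE]
  by_contra! hlt
  refine (lintegral_strict_mono (NeZero.ne Q)
    ((measurable_measure_prodMk_left hF).add_const t).aemeasurable ?_ (ae_of_all _ hlt)).not_ge
    hmean
  rw [← Measure.prod_apply hE]
  exact measure_ne_top _ _

/-- `hc` controls one base point `x` at a time; restricting to `(x, y) ∈ S` makes the joint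
event a finite union of such controlled pieces. -/
theorem measurableSet_fst_mem_and_apply_add_eq {Θ V L : Type*} [MeasurableSpace Θ]
    [MeasurableSpace V] [MeasurableSingletonClass V] [Add V]
    [MeasurableSpace L] [MeasurableSingletonClass L] [Countable L]
    {c : Θ → V → L} (hc : ∀ x j, MeasurableSet {p : Θ × V | c p.1 (x + p.2) = j})
    (S : Finset (V × L)) {ℓ : (V × L) × L × V → L} (hℓ : Measurable ℓ) :
    MeasurableSet {p : Θ × ((V × L) × L × V) | p.2.1 ∈ S ∧ c p.1 (p.2.1.1 + p.2.2.2) = ℓ p.2} := by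
  have hunion : {p : Θ × ((V × L) × L × V) | p.2.1 ∈ S ∧ c p.1 (p.2.1.1 + p.2.2.2) = ℓ p.2} =
      ⋃ s ∈ S, ⋃ j : L, {p | p.2.1 = s} ∩ {p | ℓ p.2 = j} ∩
        (fun p => (p.1, p.2.2.2)) ⁻¹' {r : Θ × V | c r.1 (s.1 + r.2) = j} := by
    ext p
    simp [eq_comm]
  rw [hunion]
  refine Finset.measurableSet_biUnion S fun s _ => MeasurableSet.iUnion fun j => ?_
  exact ((measurable_snd.fst (measurableSet_singleton s)).inter
    ((hℓ.comp measurable_snd) (measurableSet_singleton j))).inter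
    ((measurable_fst.prodMk measurable_snd.snd.snd) (hc s.1 j))

theorem margin_weak_learning_of_robust_margin_general
    (d K : ℕ)
    (S : Finset ((Fin d → ℝ) × Fin K))
    (B : Set (Fin d → ℝ)) (hBmeas : MeasurableSet B)
    (Θ : Type*) [MeasurableSpace Θ]
    (c : Θ → (Fin d → ℝ) → Fin K)
    (hc : ∀ (x : Fin d → ℝ) (j : Fin K),
      MeasurableSet {p : Θ × (Fin d → ℝ) | c p.1 (x + p.2) = j})
    (τ : ℝ) (hτ : 0 < τ)
    (Q : Measure Θ) [IsProbabilityMeasure Q]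
    (hQ : ∀ p ∈ S, ∀ δ ∈ B, ∀ y' : Fin K, y' ≠ p.2 →
      (Q {θ | c θ (p.1 + δ) = p.2}).toReal - (Q {θ | c θ (p.1 + δ) = y'}).toReal ≥ τ) :
    ∀ P' : Measure (((Fin d → ℝ) × Fin K) × Fin K × (Fin d → ℝ)),
      IsProbabilityMeasure P' →
      P' {q | q.1 ∈ S ∧ q.2.1 ≠ q.1.2 ∧ q.2.2 ∈ B} = 1 →
      ∃ θ : Θ, (P' {q | c θ (q.1.1 + q.2.2) = q.1.2}).toReal ≥
        (P' {q | c θ (q.1.1 + q.2.2) = q.2.1}).toReal + τ := by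
  intro P' _ hsupp
  have hsupp_ae : ∀ᵐ q ∂P', q.1 ∈ S ∧ q.2.1 ≠ q.1.2 ∧ q.2.2 ∈ B :=
    (ae_iff_prob_eq_one (by measurability)).2 hsupp
  have hS_conull : P' {q | q.1 ∈ S}ᶜ = 0 := hsupp_ae.mono fun q hq => hq.1
  have hmeasure_S_and (A : _ → Prop) : P' {q | q.1 ∈ S ∧ A q} = P' {q | A q} := by
    rw [Set.ofPred_and, Set.inter_comm, measure_inter_conull hS_conull]
  obtain ⟨θ, hθ⟩ : ∃ θ, P' {q | q.1 ∈ S ∧ c θ (q.1.1 + q.2.2) = q.2.1} + ENNReal.ofReal τ ≤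
      P' {q | q.1 ∈ S ∧ c θ (q.1.1 + q.2.2) = q.1.2} :=
    exists_measure_prodMk_add_le_of_ae Q P'
      (measurableSet_fst_mem_and_apply_add_eq hc S measurable_fst.snd)
      (measurableSet_fst_mem_and_apply_add_eq hc S measurable_snd.fst) (ENNReal.ofReal τ) <|
      hsupp_ae.mono fun q ⟨hqS, hy', hδ⟩ => by
        simp only [Set.preimage_ofPred_eq, hqS, true_and]
        rw [add_ofReal_le_iff_toReal (measure_ne_top _ _) (measure_ne_top _ _) hτ.le]
        linarith [hQ q.1 hqS q.2.2 hδ q.2.1 hy']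
  refine ⟨θ, ?_⟩
  rwa [hmeasure_S_and, hmeasure_S_and,
    add_ofReal_le_iff_toReal (measure_ne_top _ _) (measure_ne_top _ _) hτ.le] at hθ

/-- Sufficiency direction of Theorem 1: a robust margin of at least `τ` for some ensemble
distribution `Q` implies the margin weak-learning condition with constant `τ`. -/
theorem margin_weak_learning_of_robust_margin
    (d K : ℕ) (hd : 1 ≤ d) (hK : 2 ≤ K)
    (S : Finset ((Fin d → ℝ) × Fin K)) (hS : S.Nonempty)
    (B : Set (Fin d → ℝ)) (hB : B.Nonempty) (hBmeas : MeasurableSet B)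
    (Θ : Type*) [MeasurableSpace Θ]
    (c : Θ → (Fin d → ℝ) → Fin K)
    (hc : ∀ (x : Fin d → ℝ) (j : Fin K),
      MeasurableSet {p : Θ × (Fin d → ℝ) | c p.1 (x + p.2) = j})
    (τ : ℝ) (hτ : 0 < τ)
    (Q : Measure Θ) [IsProbabilityMeasure Q]
    (hQ : ∀ p ∈ S, ∀ δ ∈ B, ∀ y' : Fin K, y' ≠ p.2 →
      (Q {θ | c θ (p.1 + δ) = p.2}).toReal - (Q {θ | c θ (p.1 + δ) = y'}).toReal ≥ τ) :
    ∀ P' : Measure (((Fin d → ℝ) × Fin K) × Fin K × (Fin d → ℝ)),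
      IsProbabilityMeasure P' →
      P' {q | q.1 ∈ S ∧ q.2.1 ≠ q.1.2 ∧ q.2.2 ∈ B} = 1 →
      ∃ θ : Θ, (P' {q | c θ (q.1.1 + q.2.2) = q.1.2}).toReal ≥
        (P' {q | c θ (q.1.1 + q.2.2) = q.2.1}).toReal + τ :=
  margin_weak_learning_of_robust_margin_general d K S B hBmeas Θ c hc τ hτ Q hQ
end

section
/- Necessity direction of Theorem 1 (failure of weak learnability rules out robust ensembles): Suppose there exists a probability measure P' on S̃_aug × B(ε) such that for every θ ∈ Θ, E_{(x,y,y',δ)∼P'}[1[c θ (x+δ) = y]] ≤ E_{(x,y,y',δ)∼P'}[1[c θ (x+δ) = y']]. Then for every probability measure Q on Θ there exist (x, y, y') ∈ S̃_aug and δ ∈ B(ε) with [h_Q(x+δ)]_y ≤ [h_Q(x+δ)]_{y'}; in particular marginrob(Q, S) ≤ 0 for every Q, so no ensemble h_Q has strictly positive robust minimum margin on S. -/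
open MeasureTheory

/-- The ensemble margin of `Q` at point `z` with label `y`:
`[h_Q(z)]_y − max_{y' ≠ y} [h_Q(z)]_{y'}`. -/
noncomputable def ensembleMargin (d K : ℕ) (Θ : Type*) [MeasurableSpace Θ]
    (c : Θ → (Fin d → ℝ) → Fin K) (Q : Measure Θ) (z : Fin d → ℝ) (y : Fin K) : ℝ :=
  (Q {θ | c θ z = y}).toReal -
    sSup {r : ℝ | ∃ y' : Fin K, y' ≠ y ∧ r = (Q {θ | c θ z = y'}).toReal}

/-- The robust minimum margin of `Q` over the training set `S` with perturbation set `B`. -/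
noncomputable def marginRob (d K : ℕ) (Θ : Type*) [MeasurableSpace Θ]
    (c : Θ → (Fin d → ℝ) → Fin K) (S : Finset ((Fin d → ℝ) × Fin K))
    (B : Set (Fin d → ℝ)) (Q : Measure Θ) : ℝ :=
  sInf {r : ℝ | ∃ p ∈ S, ∃ δ ∈ B, r = ensembleMargin d K Θ c Q (p.1 + δ) p.2}

set_option synthInstance.maxHeartbeats 1000000
set_option maxHeartbeats 1000000
open ENNReal
lemma aux_swap (d K : ℕ) (Θ : Type*) [MeasurableSpace Θ]
    (S : Finset ((Fin d → ℝ) × Fin K)) (B : Set (Fin d → ℝ)) (hBmeas : MeasurableSet B)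
    (c : Θ → (Fin d → ℝ) → Fin K)
    (hc : ∀ (x : Fin d → ℝ) (j : Fin K),
      MeasurableSet {p : Θ × (Fin d → ℝ) | c p.1 (x + p.2) = j})
    (P' : Measure (((Fin d → ℝ) × Fin K) × Fin K × (Fin d → ℝ)))
    [IsProbabilityMeasure P']
    (hsupp : P' {q | q.1 ∈ S ∧ q.2.1 ≠ q.1.2 ∧ q.2.2 ∈ B} = 1)
    (Q : Measure Θ) [IsProbabilityMeasure Q]
    (ℓ : (((Fin d → ℝ) × Fin K) × Fin K × (Fin d → ℝ)) → Fin K) (hℓ : Measurable ℓ) :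
    AEMeasurable (fun q => Q {θ | c θ (q.1.1 + q.2.2) = ℓ q}) P' ∧
    (∀ᵐ q ∂P', q.1 ∈ S ∧ q.2.1 ≠ q.1.2 ∧ q.2.2 ∈ B) ∧
    ∫⁻ q, Q {θ | c θ (q.1.1 + q.2.2) = ℓ q} ∂P'
      = ∫⁻ θ, P' {q | c θ (q.1.1 + q.2.2) = ℓ q} ∂Q := by
  classical
  set T : Set (((Fin d → ℝ) × Fin K) × Fin K × (Fin d → ℝ)) :=
    {q | q.1 ∈ S ∧ q.2.1 ≠ q.1.2 ∧ q.2.2 ∈ B} with hTdef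
  have hTmeas : MeasurableSet T := by
    refine MeasurableSet.inter ?_ (MeasurableSet.inter ?_ ?_)
    · exact (S.finite_toSet.measurableSet).preimage measurable_fst
    · refine MeasurableSet.compl (s := {q : ((Fin d → ℝ) × Fin K) × Fin K × (Fin d → ℝ) | q.2.1 = q.1.2}) ?_
      have : {q : ((Fin d → ℝ) × Fin K) × Fin K × (Fin d → ℝ) | q.2.1 = q.1.2}
          = ⋃ j : Fin K, ((fun q => q.2.1) ⁻¹' {j} ∩ (fun q => q.1.2) ⁻¹' {j}) := by
        ext q
        simp only [Set.mem_setOf_eq, Set.mem_iUnion, Set.mem_inter_iff, Set.mem_preimage,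
          Set.mem_singleton_iff]
        constructor
        · intro h; exact ⟨q.1.2, h, rfl⟩
        · rintro ⟨j, h1, h2⟩; rw [h1, h2]
      rw [this]
      exact MeasurableSet.iUnion fun j =>
        ((measurable_fst.comp measurable_snd (measurableSet_singleton j))).inter
          ((measurable_snd.comp measurable_fst) (measurableSet_singleton j))
    · exact hBmeas.preimage (measurable_snd.comp measurable_snd)
  have hTc : P' Tᶜ = 0 := by
    rw [measure_compl hTmeas (measure_ne_top _ _), hsupp, measure_univ, tsub_self]
  have haeT : ∀ᵐ q ∂P', q ∈ T := by
    rw [ae_iff]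
    exact hTc
  -- the function
  set F : Θ → (((Fin d → ℝ) × Fin K) × Fin K × (Fin d → ℝ)) → ℝ≥0∞ :=
    fun θ q => if c θ (q.1.1 + q.2.2) = ℓ q then 1 else 0 with hFdef
  -- θ-slices are measurable
  have hYmeas : ∀ q, MeasurableSet {θ | c θ (q.1.1 + q.2.2) = ℓ q} := by
    intro q
    have : {θ | c θ (q.1.1 + q.2.2) = ℓ q}
        = (fun θ => (θ, q.2.2)) ⁻¹' {p : Θ × (Fin d → ℝ) | c p.1 (q.1.1 + p.2) = ℓ q} := rfl
    rw [this]
    exact (hc q.1.1 (ℓ q)).preimage (measurable_id.prodMk measurable_const)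
  have hinner1 : ∀ q, ∫⁻ θ, F θ q ∂Q = Q {θ | c θ (q.1.1 + q.2.2) = ℓ q} := by
    intro q
    have h1 : (fun θ => F θ q)
        = ({θ | c θ (q.1.1 + q.2.2) = ℓ q}).indicator (fun _ => (1 : ℝ≥0∞)) := by
      funext θ
      by_cases h : c θ (q.1.1 + q.2.2) = ℓ q <;> simp [hFdef, h, Set.indicator]
    rw [h1, lintegral_indicator_const (hYmeas q), one_mul]
  -- the measurable "global" version on the product space
  set Ayn : Set (Θ × (((Fin d → ℝ) × Fin K) × Fin K × (Fin d → ℝ))) :=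
    ⋃ p ∈ S, ⋃ j : Fin K,
      (((fun r : Θ × (((Fin d → ℝ) × Fin K) × Fin K × (Fin d → ℝ)) => (r.1, r.2.2.2)) ⁻¹'
        {w : Θ × (Fin d → ℝ) | c w.1 (p.1 + w.2) = j})
        ∩ {r | r.2.1 = p} ∩ {r | ℓ r.2 = j}) with hAyndef
  have hAynmeas : MeasurableSet Ayn := by
    refine MeasurableSet.biUnion S.countable_toSet fun p _ => MeasurableSet.iUnion fun j => ?_
    refine MeasurableSet.inter (MeasurableSet.inter ?_ ?_) ?_
    · exact (hc p.1 j).preimage (measurable_fst.prodMk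
        (measurable_snd.comp (measurable_snd.comp measurable_snd)))
    · exact (measurable_fst.comp measurable_snd) (measurableSet_singleton p)
    · exact (hℓ.comp measurable_snd) (measurableSet_singleton j)
  have hAyn_iff : ∀ r : Θ × (((Fin d → ℝ) × Fin K) × Fin K × (Fin d → ℝ)),
      r.2 ∈ T → (r ∈ Ayn ↔ c r.1 (r.2.1.1 + r.2.2.2) = ℓ r.2) := by
    intro r hr
    constructor
    · intro h
      simp only [hAyndef, Set.mem_iUnion, Set.mem_inter_iff, Set.mem_preimage,
        Set.mem_setOf_eq] at h
      obtain ⟨p, _, j, ⟨⟨h1, h2⟩, h3⟩⟩ := h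
      rw [← h2] at h1
      rw [h1, h3]
    · intro h
      simp only [hAyndef, Set.mem_iUnion, Set.mem_inter_iff, Set.mem_preimage,
        Set.mem_setOf_eq]
      exact ⟨r.2.1, hr.1, ℓ r.2, ⟨⟨by rw [← h], rfl⟩, rfl⟩⟩
  have hprodnull : (Q.prod P') {r : Θ × (((Fin d → ℝ) × Fin K) × Fin K × (Fin d → ℝ)) | r.2 ∉ T} = 0 := by
    have : {r : Θ × (((Fin d → ℝ) × Fin K) × Fin K × (Fin d → ℝ)) | r.2 ∉ T}
        = (Set.univ : Set Θ) ×ˢ Tᶜ := by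
      ext r; simp
    rw [this, Measure.prod_prod, hTc, mul_zero]
  have haeT2 : ∀ᵐ r ∂(Q.prod P'), r.2 ∈ T := by
    rw [ae_iff]; exact hprodnull
  set G : (Θ × (((Fin d → ℝ) × Fin K) × Fin K × (Fin d → ℝ))) → ℝ≥0∞ :=
    Ayn.indicator (fun _ => 1) with hGdef
  have hGmeas : Measurable G := measurable_const.indicator hAynmeas
  have hFG : Function.uncurry F =ᵐ[Q.prod P'] G := by
    filter_upwards [haeT2] with r hr
    by_cases h : c r.1 (r.2.1.1 + r.2.2.2) = ℓ r.2
    · simp [Function.uncurry, hFdef, hGdef, h, Set.indicator, (hAyn_iff r hr).mpr h]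
    · have : r ∉ Ayn := fun hmem => h ((hAyn_iff r hr).mp hmem)
      simp [Function.uncurry, hFdef, hGdef, h, Set.indicator, this]
  have hFae : AEMeasurable (Function.uncurry F) (Q.prod P') :=
    hGmeas.aemeasurable.congr hFG.symm
  -- measurability of q ↦ Q(Y q)
  have hmeasg : AEMeasurable (fun q => Q {θ | c θ (q.1.1 + q.2.2) = ℓ q}) P' := by
    have hmer : Measurable fun q => ∫⁻ θ, G (θ, q) ∂Q := hGmeas.lintegral_prod_left'
    refine hmer.aemeasurable.congr ?_
    filter_upwards [haeT] with q hq
    have : ∀ θ, G (θ, q) = F θ q := by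
      intro θ
      by_cases h : c θ (q.1.1 + q.2.2) = ℓ q
      · simp [hGdef, hFdef, Set.indicator, (hAyn_iff (θ, q) hq).mpr h, h]
      · have : (θ, q) ∉ Ayn := fun hmem => h ((hAyn_iff (θ, q) hq).mp hmem)
        simp [hGdef, hFdef, Set.indicator, this, h]
    calc (∫⁻ θ, G (θ, q) ∂Q) = ∫⁻ θ, F θ q ∂Q := by simp_rw [this]
    _ = Q {θ | c θ (q.1.1 + q.2.2) = ℓ q} := hinner1 q
  refine ⟨hmeasg, haeT, ?_⟩
  -- inner q-integral for fixed θ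
  have hinner2 : ∀ θ, ∫⁻ q, F θ q ∂P' = P' {q | c θ (q.1.1 + q.2.2) = ℓ q} := by
    intro θ
    set Zn : Set (((Fin d → ℝ) × Fin K) × Fin K × (Fin d → ℝ)) :=
      ⋃ p ∈ S, ⋃ j : Fin K,
        (((fun q : ((Fin d → ℝ) × Fin K) × Fin K × (Fin d → ℝ) => q.2.2) ⁻¹'
          {δ : Fin d → ℝ | c θ (p.1 + δ) = j})
          ∩ {q | q.1 = p} ∩ {q | ℓ q = j}) with hZndef
    have hZnmeas : MeasurableSet Zn := by
      refine MeasurableSet.biUnion S.countable_toSet fun p _ => MeasurableSet.iUnion fun j => ?_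
      refine MeasurableSet.inter (MeasurableSet.inter ?_ ?_) ?_
      · have : MeasurableSet {δ : Fin d → ℝ | c θ (p.1 + δ) = j} :=
          (hc p.1 j).preimage (measurable_prodMk_left)
        exact this.preimage (measurable_snd.comp measurable_snd)
      · exact measurable_fst (measurableSet_singleton p)
      · exact hℓ (measurableSet_singleton j)
    have hZn_iff : ∀ q, q ∈ T → (q ∈ Zn ↔ c θ (q.1.1 + q.2.2) = ℓ q) := by
      intro q hq
      constructor
      · intro h
        simp only [hZndef, Set.mem_iUnion, Set.mem_inter_iff, Set.mem_preimage,
          Set.mem_setOf_eq] at h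
        obtain ⟨p, _, j, ⟨⟨h1, h2⟩, h3⟩⟩ := h
        rw [← h2] at h1
        rw [h1, h3]
      · intro h
        simp only [hZndef, Set.mem_iUnion, Set.mem_inter_iff, Set.mem_preimage,
          Set.mem_setOf_eq]
        exact ⟨q.1, hq.1, ℓ q, ⟨⟨by rw [← h], rfl⟩, rfl⟩⟩
    have h1 : (fun q => F θ q) =ᵐ[P'] Zn.indicator (fun _ => (1 : ℝ≥0∞)) := by
      filter_upwards [haeT] with q hq
      by_cases h : c θ (q.1.1 + q.2.2) = ℓ q
      · simp [hFdef, h, Set.indicator, (hZn_iff q hq).mpr h]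
      · have : q ∉ Zn := fun hmem => h ((hZn_iff q hq).mp hmem)
        simp [hFdef, h, Set.indicator, this]
    have hZtarget : P' Zn = P' {q | c θ (q.1.1 + q.2.2) = ℓ q} := by
      have key : ∀ A : Set (((Fin d → ℝ) × Fin K) × Fin K × (Fin d → ℝ)), P' A = P' (A ∩ T) := by
        intro A
        refine le_antisymm ?_ (measure_mono Set.inter_subset_left)
        calc P' A ≤ P' ((A ∩ T) ∪ Tᶜ) := measure_mono (by
              intro q hq
              by_cases h : q ∈ T
              · exact Or.inl ⟨hq, h⟩
              · exact Or.inr h)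
          _ ≤ P' (A ∩ T) + P' Tᶜ := measure_union_le _ _
          _ = P' (A ∩ T) := by rw [hTc, add_zero]
      rw [key Zn, key {q | c θ (q.1.1 + q.2.2) = ℓ q}]
      congr 1
      ext q
      constructor
      · rintro ⟨h1, h2⟩; exact ⟨(hZn_iff q h2).mp h1, h2⟩
      · rintro ⟨h1, h2⟩; exact ⟨(hZn_iff q h2).mpr h1, h2⟩
    calc ∫⁻ q, F θ q ∂P'
        = ∫⁻ q, Zn.indicator (fun _ => (1 : ℝ≥0∞)) q ∂P' := lintegral_congr_ae h1
      _ = 1 * P' Zn := lintegral_indicator_const hZnmeas 1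
      _ = P' {q | c θ (q.1.1 + q.2.2) = ℓ q} := by rw [one_mul, hZtarget]
  calc ∫⁻ q, Q {θ | c θ (q.1.1 + q.2.2) = ℓ q} ∂P'
      = ∫⁻ q, ∫⁻ θ, F θ q ∂Q ∂P' := by
        refine lintegral_congr fun q => (hinner1 q).symm
    _ = ∫⁻ θ, ∫⁻ q, F θ q ∂P' ∂Q := (lintegral_lintegral_swap hFae).symm
    _ = ∫⁻ θ, P' {q | c θ (q.1.1 + q.2.2) = ℓ q} ∂Q := lintegral_congr fun θ => hinner2 θ

/-- Necessity direction of Theorem 1: if the margin weak-learning condition fails (witnessed by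
some distribution `P'` on `S̃_aug × B(ε)`), then no ensemble has positive robust margin. -/
theorem no_robust_ensemble_of_weak_learning_failure
    (d K : ℕ) (hd : 1 ≤ d) (hK : 2 ≤ K)
    (S : Finset ((Fin d → ℝ) × Fin K)) (hS : S.Nonempty)
    (B : Set (Fin d → ℝ)) (hB : B.Nonempty) (hBmeas : MeasurableSet B)
    (Θ : Type*) [MeasurableSpace Θ]
    (c : Θ → (Fin d → ℝ) → Fin K)
    (hc : ∀ (x : Fin d → ℝ) (j : Fin K),
      MeasurableSet {p : Θ × (Fin d → ℝ) | c p.1 (x + p.2) = j})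
    (P' : Measure (((Fin d → ℝ) × Fin K) × Fin K × (Fin d → ℝ)))
    (hP'prob : IsProbabilityMeasure P')
    (hP'supp : P' {q | q.1 ∈ S ∧ q.2.1 ≠ q.1.2 ∧ q.2.2 ∈ B} = 1)
    (hP' : ∀ θ : Θ, (P' {q | c θ (q.1.1 + q.2.2) = q.1.2}).toReal ≤
      (P' {q | c θ (q.1.1 + q.2.2) = q.2.1}).toReal) :
    ∀ Q : Measure Θ, IsProbabilityMeasure Q →
      (∃ p ∈ S, ∃ y' : Fin K, y' ≠ p.2 ∧ ∃ δ ∈ B,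
        (Q {θ | c θ (p.1 + δ) = p.2}).toReal ≤ (Q {θ | c θ (p.1 + δ) = y'}).toReal) ∧
      marginRob d K Θ c S B Q ≤ 0 := by
  classical
  intro Q hQ
  haveI := hP'prob
  haveI := hQ
  have hℓ1 : Measurable fun q : ((Fin d → ℝ) × Fin K) × Fin K × (Fin d → ℝ) => q.1.2 :=
    measurable_snd.comp measurable_fst
  have hℓ2 : Measurable fun q : ((Fin d → ℝ) × Fin K) × Fin K × (Fin d → ℝ) => q.2.1 :=
    measurable_fst.comp measurable_snd
  obtain ⟨hm1, haeT, he1⟩ := aux_swap d K Θ S B hBmeas c hc P' hP'supp Q _ hℓ1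
  obtain ⟨hm2, -, he2⟩ := aux_swap d K Θ S B hBmeas c hc P' hP'supp Q _ hℓ2
  have hchain : ∫⁻ q, Q {θ | c θ (q.1.1 + q.2.2) = q.1.2} ∂P'
      ≤ ∫⁻ q, Q {θ | c θ (q.1.1 + q.2.2) = q.2.1} ∂P' := by
    rw [he1, he2]
    refine lintegral_mono fun θ => ?_
    exact (ENNReal.toReal_le_toReal (measure_ne_top _ _) (measure_ne_top _ _)).mp (hP' θ)
  have key : ∃ q : ((Fin d → ℝ) × Fin K) × Fin K × (Fin d → ℝ),
      (q.1 ∈ S ∧ q.2.1 ≠ q.1.2 ∧ q.2.2 ∈ B) ∧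
      (Q {θ | c θ (q.1.1 + q.2.2) = q.1.2}).toReal ≤
        (Q {θ | c θ (q.1.1 + q.2.2) = q.2.1}).toReal := by
    by_contra hcon
    push_neg at hcon
    have hlt : ∀ᵐ q ∂P', Q {θ | c θ (q.1.1 + q.2.2) = q.2.1}
        < Q {θ | c θ (q.1.1 + q.2.2) = q.1.2} := by
      filter_upwards [haeT] with q hq
      have h := hcon q hq
      exact (ENNReal.toReal_lt_toReal (measure_ne_top _ _) (measure_ne_top _ _)).mp h
    have hne : P' ≠ 0 := IsProbabilityMeasure.ne_zero P'
    have hfin : ∫⁻ q, Q {θ | c θ (q.1.1 + q.2.2) = q.2.1} ∂P' ≠ ⊤ := by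
      refine ne_top_of_le_ne_top (by simp : (1 : ℝ≥0∞) ≠ ⊤) ?_
      calc ∫⁻ q, Q {θ | c θ (q.1.1 + q.2.2) = q.2.1} ∂P'
          ≤ ∫⁻ _, 1 ∂P' := lintegral_mono fun q => prob_le_one
        _ = 1 := by simp
    exact absurd hchain (not_le.mpr (lintegral_strict_mono hne hm1 hfin hlt))
  obtain ⟨q, ⟨hqS, hqne, hqB⟩, hle⟩ := key
  have hmain : ∃ p ∈ S, ∃ y' : Fin K, y' ≠ p.2 ∧ ∃ δ ∈ B,
      (Q {θ | c θ (p.1 + δ) = p.2}).toReal ≤ (Q {θ | c θ (p.1 + δ) = y'}).toReal :=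
    ⟨q.1, hqS, q.2.1, hqne, q.2.2, hqB, hle⟩
  refine ⟨hmain, ?_⟩
  obtain ⟨p, hpS, y', hy', δ, hδB, hQle⟩ := hmain
  haveI : Nontrivial (Fin K) := ⟨⟨⟨0, by omega⟩, ⟨1, by omega⟩, by simp [Fin.ext_iff]⟩⟩
  have htoReal_le_one : ∀ s : Set Θ, (Q s).toReal ≤ 1 := by
    intro s
    calc (Q s).toReal ≤ (1 : ℝ≥0∞).toReal := ENNReal.toReal_mono one_ne_top prob_le_one
      _ = 1 := ENNReal.toReal_one
  have hmargin_lb : ∀ (z : Fin d → ℝ) (y : Fin K), -1 ≤ ensembleMargin d K Θ c Q z y := by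
    intro z y
    unfold ensembleMargin
    have hub : sSup {r : ℝ | ∃ y' : Fin K, y' ≠ y ∧ r = (Q {θ | c θ z = y'}).toReal} ≤ 1 := by
      refine Real.sSup_le ?_ one_pos.le
      rintro r ⟨y'', -, rfl⟩
      exact htoReal_le_one _
    have h0 : (0 : ℝ) ≤ (Q {θ | c θ z = y}).toReal := ENNReal.toReal_nonneg
    linarith
  have hmargin_le : ensembleMargin d K Θ c Q (p.1 + δ) p.2 ≤ 0 := by
    unfold ensembleMargin
    have hbdd : BddAbove {r : ℝ | ∃ y'' : Fin K, y'' ≠ p.2 ∧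
        r = (Q {θ | c θ (p.1 + δ) = y''}).toReal} := by
      refine ⟨1, ?_⟩
      rintro r ⟨y'', -, rfl⟩
      exact htoReal_le_one _
    have hmem : (Q {θ | c θ (p.1 + δ) = y'}).toReal ∈ {r : ℝ | ∃ y'' : Fin K, y'' ≠ p.2 ∧
        r = (Q {θ | c θ (p.1 + δ) = y''}).toReal} := ⟨y', hy', rfl⟩
    have := le_csSup hbdd hmem
    linarith
  have hbddM : BddBelow {r : ℝ | ∃ p ∈ S, ∃ δ ∈ B,
      r = ensembleMargin d K Θ c Q (p.1 + δ) p.2} := by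
    refine ⟨-1, ?_⟩
    rintro r ⟨p', -, δ', -, rfl⟩
    exact hmargin_lb _ _
  have hmemM : ensembleMargin d K Θ c Q (p.1 + δ) p.2 ∈ {r : ℝ | ∃ p ∈ S, ∃ δ ∈ B,
      r = ensembleMargin d K Θ c Q (p.1 + δ) p.2} := ⟨p, hpS, δ, hδB, rfl⟩
  calc marginRob d K Θ c S B Q ≤ ensembleMargin d K Θ c Q (p.1 + δ) p.2 :=
        csInf_le hbddM hmemM
    _ ≤ 0 := hmargin_le
end

section
/- First part of Proposition 1 (WL_RobBoost implies WL_MRBoost): Let H be a set of classifiers h : ℝ^d → Fin K such that for every h ∈ H, x ∈ ℝ^d and j ∈ Fin K the set {δ ∈ ℝ^d : h(x+δ) = j} is Borel, and let τ > 0. Suppose that for every probability distribution P' on the finite set S̃_aug there exists h ∈ H with E_{(x,y,y')∼P'}[1[∀ δ ∈ B(ε): h(x+δ) = y]] ≥ E_{(x,y,y')∼P'}[1[∃ δ ∈ B(ε): h(x+δ) = y']] + τ (the weak learning condition of RobBoost). Then for every probability measure P'' on S̃_aug × B(ε) there exists h ∈ H with E_{(x,y,y',δ)∼P''}[1[h(x+δ)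 = y]] ≥ E_{(x,y,y',δ)∼P''}[1[h(x+δ) = y']] + τ (the weak learning condition of MRBoost). -/
open MeasureTheory Classical

/-! Weight each augmented example `(x, y, y')` by the mass the marginal of `P''` gives it. As
`P''` lives on `S̃_aug × B(ε)`, a sample with `h (x + δ) = y'` has an augmented example with
`∃ δ ∈ B, h (x + δ) = y'`, and an augmented example with `∀ δ ∈ B, h (x + δ) = y` has almost all
of its samples satisfying `h (x + δ) = y`. Hence the two sides of the MRBoost condition for `P''`
are squeezed by the two sides of the RobBoost condition for its marginal. -/

section

variable {X E : Type*} [MeasurableSpace X] [MeasurableSingletonClass X] [MeasurableSpace E]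
  {μ : Measure (X × E)} {Q : Finset X} {B : Set E}

theorem sum_measureReal_fst_preimage_eq_one [IsProbabilityMeasure μ] (hQ : ∀ᵐ p ∂μ, p.1 ∈ Q) :
    ∑ q ∈ Q, μ.real (Prod.fst ⁻¹' {q}) = 1 := by
  have hQ' : μ (Prod.fst ⁻¹' Q) = 1 :=
    (mem_ae_iff_prob_eq_one (Q.measurableSet.preimage measurable_fst)).1 hQ
  rw [sum_measureReal_preimage_singleton Q fun q _ ↦ measurable_fst (measurableSet_singleton q),
    measureReal_def, hQ', ENNReal.toReal_one]

theorem measureReal_le_sum_measureReal_fst_preimage [IsFiniteMeasure μ]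
    (hQB : ∀ᵐ p ∂μ, p.1 ∈ Q ∧ p.2 ∈ B) (T : Set (X × E)) :
    μ.real T ≤ ∑ q ∈ Q with ∃ e ∈ B, (q, e) ∈ T, μ.real (Prod.fst ⁻¹' {q}) := by
  rw [sum_measureReal_preimage_singleton _ fun q _ ↦ measurable_fst (measurableSet_singleton q)]
  refine ENNReal.toReal_mono (measure_ne_top _ _) (measure_mono_ae ?_)
  filter_upwards [hQB] with p ⟨hpQ, hpB⟩ hpT
  simpa using ⟨hpQ, p.2, hpB, hpT⟩

theorem sum_measureReal_fst_preimage_le_measureReal [IsFiniteMeasure μ] (Q : Finset X)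
    (hB : ∀ᵐ p ∂μ, p.2 ∈ B) (T : Set (X × E)) :
    ∑ q ∈ Q with ∀ e ∈ B, (q, e) ∈ T, μ.real (Prod.fst ⁻¹' {q}) ≤ μ.real T := by
  rw [sum_measureReal_preimage_singleton _ fun q _ ↦ measurable_fst (measurableSet_singleton q)]
  refine ENNReal.toReal_mono (measure_ne_top _ _) (measure_mono_ae ?_)
  filter_upwards [hB] with p hpB hpQ
  exact (Finset.mem_filter.1 hpQ).2 p.2 hpB

end

theorem wl_robboost_implies_wl_mrboost_general
    (d K : ℕ)
    (S : Finset ((Fin d → ℝ) × Fin K))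
    (B : Set (Fin d → ℝ)) (hBmeas : MeasurableSet B)
    (H : Set ((Fin d → ℝ) → Fin K))
    (τ : ℝ)
    -- the weak learning condition of RobBoost, over distributions on the finite set S̃_aug
    (hWL : ∀ w : ((Fin d → ℝ) × Fin K) × Fin K → ℝ,
      (∀ q, 0 ≤ w q) →
      (∑ q ∈ (S ×ˢ (Finset.univ : Finset (Fin K))).filter (fun q => q.2 ≠ q.1.2), w q) = 1 →
      ∃ h ∈ H,
        (∑ q ∈ (S ×ˢ (Finset.univ : Finset (Fin K))).filter (fun q => q.2 ≠ q.1.2),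
          w q * (if ∀ δ ∈ B, h (q.1.1 + δ) = q.1.2 then (1 : ℝ) else 0)) ≥
        (∑ q ∈ (S ×ˢ (Finset.univ : Finset (Fin K))).filter (fun q => q.2 ≠ q.1.2),
          w q * (if ∃ δ ∈ B, h (q.1.1 + δ) = q.2 then (1 : ℝ) else 0)) + τ) :
    -- the weak learning condition of MRBoost, over distributions on S̃_aug × B(ε)
    ∀ P'' : Measure ((((Fin d → ℝ) × Fin K) × Fin K) × (Fin d → ℝ)),
      IsProbabilityMeasure P'' →
      P'' {q | q.1.1 ∈ S ∧ q.1.2 ≠ q.1.1.2 ∧ q.2 ∈ B} = 1 →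
      ∃ h ∈ H, (P'' {q | h (q.1.1.1 + q.2) = q.1.1.2}).toReal ≥
        (P'' {q | h (q.1.1.1 + q.2) = q.1.2}).toReal + τ := by
  intro P'' _ hP''
  set Q := (S ×ˢ (Finset.univ : Finset (Fin K))).filter (fun q => q.2 ≠ q.1.2)
  have hsupport : {q : (((Fin d → ℝ) × Fin K) × Fin K) × (Fin d → ℝ) |
      q.1.1 ∈ S ∧ q.1.2 ≠ q.1.1.2 ∧ q.2 ∈ B} = Prod.fst ⁻¹' ↑Q ∩ Prod.snd ⁻¹' B := by
    ext; simp [Q, and_assoc]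
  have hQB : ∀ᵐ p ∂P'', p.1 ∈ Q ∧ p.2 ∈ B := by
    rw [hsupport] at hP''
    exact (mem_ae_iff_prob_eq_one ((Q.measurableSet.preimage measurable_fst).inter
      (hBmeas.preimage measurable_snd))).2 hP''
  obtain ⟨h, hH, hWLh⟩ := hWL (fun q ↦ P''.real (Prod.fst ⁻¹' {q})) (fun _ ↦ measureReal_nonneg)
    (sum_measureReal_fst_preimage_eq_one (hQB.mono fun _ hp ↦ hp.1))
  refine ⟨h, hH, ?_⟩
  simp only [mul_ite, mul_one, mul_zero, ← Finset.sum_filter] at hWLh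
  show P''.real _ ≥ P''.real _ + τ
  calc P''.real {q | h (q.1.1.1 + q.2) = q.1.1.2}
      ≥ ∑ q ∈ Q with ∀ δ ∈ B, h (q.1.1 + δ) = q.1.2, P''.real (Prod.fst ⁻¹' {q}) :=
        sum_measureReal_fst_preimage_le_measureReal Q (hQB.mono fun _ hp ↦ hp.2)
          {q | h (q.1.1.1 + q.2) = q.1.1.2}
    _ ≥ ∑ q ∈ Q with ∃ δ ∈ B, h (q.1.1 + δ) = q.2, P''.real (Prod.fst ⁻¹' {q}) + τ := hWLh
    _ ≥ P''.real {q | h (q.1.1.1 + q.2) = q.1.2} + τ := by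
        gcongr; exact measureReal_le_sum_measureReal_fst_preimage hQB _

/-- First part of Proposition 1: the weak learning condition of RobBoost implies the
margin weak learning condition of MRBoost, with the same constant `τ`. -/
theorem wl_robboost_implies_wl_mrboost
    (d K : ℕ) (hd : 1 ≤ d) (hK : 2 ≤ K)
    (S : Finset ((Fin d → ℝ) × Fin K)) (hS : S.Nonempty)
    (B : Set (Fin d → ℝ)) (hB : B.Nonempty) (hBmeas : MeasurableSet B)
    (H : Set ((Fin d → ℝ) → Fin K))
    (hH : ∀ h ∈ H, ∀ (x : Fin d → ℝ) (j : Fin K),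
      MeasurableSet {δ : Fin d → ℝ | h (x + δ) = j})
    (τ : ℝ) (hτ : 0 < τ)
    -- the weak learning condition of RobBoost, over distributions on the finite set S̃_aug
    (hWL : ∀ w : ((Fin d → ℝ) × Fin K) × Fin K → ℝ,
      (∀ q, 0 ≤ w q) →
      (∑ q ∈ (S ×ˢ (Finset.univ : Finset (Fin K))).filter (fun q => q.2 ≠ q.1.2), w q) = 1 →
      ∃ h ∈ H,
        (∑ q ∈ (S ×ˢ (Finset.univ : Finset (Fin K))).filter (fun q => q.2 ≠ q.1.2),
          w q * (if ∀ δ ∈ B, h (q.1.1 + δ) = q.1.2 then (1 : ℝ) else 0)) ≥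
        (∑ q ∈ (S ×ˢ (Finset.univ : Finset (Fin K))).filter (fun q => q.2 ≠ q.1.2),
          w q * (if ∃ δ ∈ B, h (q.1.1 + δ) = q.2 then (1 : ℝ) else 0)) + τ) :
    -- the weak learning condition of MRBoost, over distributions on S̃_aug × B(ε)
    ∀ P'' : Measure ((((Fin d → ℝ) × Fin K) × Fin K) × (Fin d → ℝ)),
      IsProbabilityMeasure P'' →
      P'' {q | q.1.1 ∈ S ∧ q.1.2 ≠ q.1.1.2 ∧ q.2 ∈ B} = 1 →
      ∃ h ∈ H, (P'' {q | h (q.1.1.1 + q.2) = q.1.1.2}).toReal ≥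
        (P'' {q | h (q.1.1.1 + q.2) = q.1.2}).toReal + τ :=
  wl_robboost_implies_wl_mrboost_general d K S B hBmeas H τ hWL
end

section
/- The hypothesis class constructed in the proof of Proposition 1 satisfies the margin weak-learning condition WL_MRBoost with τ = 1/5: For every Borel probability measure μ on ℝ with μ([−1, 1]) = 1, there exists θ ∈ [−1, 9/10] such that μ({x ∈ ℝ : h_θ(x) = 1}) ≥ μ({x ∈ ℝ : h_θ(x) = 0}) + 1/5; moreover this θ satisfies μ({x : h_θ(x) = 1}) ≥ 3/5 = (1 + 1/5)/2. -/
/-!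
Place three pairwise disjoint windows of width `1/10` at `θ = -1, -1/2, 0`. Their total
`μ`-mass is at most `1`, so one of them has mass at most `2/5`; for that `θ` the classifier
`h_θ` outputs `1` with probability at least `3/5` and `0` with probability at most `2/5`.
-/

open MeasureTheory ENNReal Set Function

/-- The classifier `h_θ` of Proposition 1. -/
noncomputable def hClf (θ : ℝ) : ℝ → Fin 2 := fun x =>
  if θ ≤ x ∧ x ≤ θ + 1 / 10 then 0 else 1

theorem setOf_hClf_eq_zero (θ : ℝ) : {x | hClf θ x = 0} = Icc θ (θ + 1 / 10) := by
  ext x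
  by_cases hx : θ ≤ x ∧ x ≤ θ + 1 / 10 <;> simp [hClf, hx]

theorem setOf_hClf_eq_one (θ : ℝ) : {x | hClf θ x = 1} = (Icc θ (θ + 1 / 10))ᶜ := by
  ext x
  by_cases hx : θ ≤ x ∧ x ≤ θ + 1 / 10 <;> simp [hClf, hx]

theorem pairwise_disjoint_Icc_of_lt {ι α : Type*} [LinearOrder ι] [Preorder α] {a b : ι → α}
    (h : ∀ i j, i < j → b i < a j) : Pairwise (Disjoint on fun i => Icc (a i) (b i)) :=
  (pairwise_disjoint_on _).2 fun i j hij =>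
    (Iic_disjoint_Ici.2 (h i j hij).not_ge).mono Icc_subset_Iic_self Icc_subset_Ici_self

theorem exists_measure_le_of_pairwise_disjoint {α ι : Type*} [MeasurableSpace α] {μ : Measure α}
    [Fintype ι] [Nonempty ι] {s : ι → Set α} (hs : ∀ i, MeasurableSet (s i))
    (hd : Pairwise (Disjoint on s)) {c : ℝ≥0∞} (hc : μ univ ≤ Fintype.card ι * c) :
    ∃ i, μ (s i) ≤ c := by
  have hsum : ∑ i, μ (s i) ≤ ∑ _i : ι, c := by
    refine (sum_measure_le_measure_univ (fun i _ => (hs i).nullMeasurableSet)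
      fun i _ j _ hij => (hd hij).aedisjoint).trans ?_
    simpa using hc
  obtain ⟨i, -, hi⟩ := ENNReal.exists_le_of_sum_le Finset.univ_nonempty hsum
  exact ⟨i, hi⟩

theorem measure_compl_margin_of_measure_le_two_fifths {α : Type*} [MeasurableSpace α]
    {μ : Measure α} [IsProbabilityMeasure μ] {s : Set α} (hs : MeasurableSet s)
    (h : μ s ≤ 2 / 5) : μ s + 1 / 5 ≤ μ sᶜ ∧ 3 / 5 ≤ μ sᶜ := by
  have hcompl : 3 / 5 ≤ μ sᶜ := by
    rw [prob_compl_eq_one_sub hs]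
    refine ENNReal.le_sub_of_add_le_left (measure_ne_top μ s) ?_
    calc μ s + 3 / 5 ≤ 2 / 5 + 3 / 5 := by gcongr
      _ = 1 := by rw [ENNReal.div_add_div_same]; norm_num [ENNReal.div_self]
  refine ⟨?_, hcompl⟩
  calc μ s + 1 / 5 ≤ 2 / 5 + 1 / 5 := by gcongr
    _ = 3 / 5 := by rw [ENNReal.div_add_div_same]; norm_num
    _ ≤ μ sᶜ := hcompl

theorem hClf_satisfies_wl_mrboost_general (μ : Measure ℝ) [IsProbabilityMeasure μ] :
    ∃ θ ∈ Set.Icc (-1 : ℝ) (9 / 10),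
      μ {x | hClf θ x = 1} ≥ μ {x | hClf θ x = 0} + 1 / 5 ∧
      μ {x | hClf θ x = 1} ≥ 3 / 5 := by
  set θ : Fin 3 → ℝ := fun i => (i : ℝ) / 2 - 1
  have hgap : ∀ i j, i < j → θ i + 1 / 10 < θ j := by
    intro i j hij
    have : (i : ℝ) + 1 ≤ j := by exact_mod_cast hij
    simp only [θ]
    linarith
  obtain ⟨i, hi⟩ := exists_measure_le_of_pairwise_disjoint (μ := μ) (c := 2 / 5)
    (fun i => measurableSet_Icc) (pairwise_disjoint_Icc_of_lt hgap)
    (by rw [measure_univ, Fintype.card_fin, ← mul_div_assoc, ENNReal.le_div_iff_mul_le] <;>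
      norm_num)
  refine ⟨θ i, ?_, ?_⟩
  · have : (i : ℝ) ≤ 2 := by exact_mod_cast Nat.le_of_lt_succ i.isLt
    constructor <;> simp only [θ] <;> linarith [(i : ℕ).cast_nonneg (α := ℝ)]
  · rw [setOf_hClf_eq_one, setOf_hClf_eq_zero]
    exact measure_compl_margin_of_measure_le_two_fifths measurableSet_Icc hi

/-- The hypothesis class `{h_θ : θ ∈ [−1, 9/10]}` satisfies the margin weak-learning
condition WL_MRBoost with `τ = 1/5`. -/
theorem hClf_satisfies_wl_mrboost (μ : Measure ℝ) [IsProbabilityMeasure μ]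
    (h : μ (Set.Icc (-1) 1) = 1) :
    ∃ θ ∈ Set.Icc (-1 : ℝ) (9 / 10),
      μ {x | hClf θ x = 1} ≥ μ {x | hClf θ x = 0} + 1 / 5 ∧
      μ {x | hClf θ x = 1} ≥ 3 / 5 :=
  hClf_satisfies_wl_mrboost_general μ
end

section
/- Stability of exponentially tilted distributions (Lemma in Appendix B, exp_stability): Let Z ⊆ ℝ^d be compact with Lebesgue measure vol(Z) > 0, and let f, g : Z → ℝ be Lebesgue-measurable with sup_{z∈Z}|f(z)| ≤ B_f and sup_{z∈Z}|g(z)| ≤ B_g. Let P_1 and P_2 be the probability measures on Z with densities proportional to exp(f(z)) and exp(f(z)+g(z)) with respect to Lebesgue measure. Then the total variation distance satisfies TV(P_1, P_2) = (1/2)∫_Z |exp(f(z))/N_1 − exp(f(z)+g(z))/N_2| dz ≤ (exp(2B_g) − 1)/2, where N_1 = ∫_Z exp(f(z)) dz and N_2 = ∫_Z exp(f(z)+g(z)) dz. -/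
/-!
Write `exp (f + g) = exp f * h` with `h = exp g ∈ [e^{-B_g}, e^{B_g}]`. Then `N₂ / N₁` also lies in
`[e^{-B_g}, e^{B_g}]`, so the likelihood ratio `h N₁ / N₂` of the two densities lies in
`[e^{-2B_g}, e^{2B_g}]`, and `|p₁ - p₂| = p₁ |1 - h N₁ / N₂| ≤ (e^{2B_g} - 1) p₁` integrates to the bound.
-/

open MeasureTheory

lemma abs_one_sub_mul_div_le {a b x N₁ N₂ : ℝ} (ha : 0 < a) (hN₁ : 0 < N₁)
    (hax : a ≤ x) (hxb : x ≤ b) (hN₂a : a * N₁ ≤ N₂) (hN₂b : N₂ ≤ b * N₁) :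
    |1 - x * N₁ / N₂| ≤ b / a - 1 := by
  have hb : 0 < b := ha.trans_le (hax.trans hxb)
  have hN₂ : 0 < N₂ := (mul_pos ha hN₁).trans_le hN₂a
  have hratio_le : x * N₁ / N₂ ≤ b / a := by
    rw [div_le_div_iff₀ hN₂ ha]
    nlinarith [mul_le_mul_of_nonneg_right hxb (mul_pos ha hN₁).le]
  have hratio_ge : a / b ≤ x * N₁ / N₂ := by
    rw [div_le_div_iff₀ hb hN₂]
    nlinarith [mul_le_mul_of_nonneg_right hax (mul_pos hb hN₁).le]
  -- `1 - a / b ≤ b / a - 1` is AM–GM for `a / b` and `b / a`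
  have hamgm : 1 - a / b ≤ b / a - 1 := by
    rw [div_sub_one ha.ne', one_sub_div hb.ne', div_le_div_iff₀ hb ha]
    nlinarith [sq_nonneg (b - a)]
  exact abs_le.2 ⟨by linarith, by linarith⟩

lemma integral_le_integral_mul_of_le {α : Type*} [MeasurableSpace α] {μ : Measure α}
    {p h : α → ℝ} {c : ℝ} (hp : Integrable p μ) (hp₀ : 0 ≤ᵐ[μ] p)
    (hph : Integrable (fun x => p x * h x) μ) (hch : ∀ᵐ x ∂μ, c ≤ h x) :
    c * ∫ x, p x ∂μ ≤ ∫ x, p x * h x ∂μ := by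
  rw [← integral_const_mul]
  refine integral_mono_ae (hp.const_mul c) hph ?_
  filter_upwards [hp₀, hch] with x hpx hcx
  simpa only [mul_comm c] using mul_le_mul_of_nonneg_left hcx hpx

lemma integral_mul_le_of_le {α : Type*} [MeasurableSpace α] {μ : Measure α}
    {p h : α → ℝ} {c : ℝ} (hp : Integrable p μ) (hp₀ : 0 ≤ᵐ[μ] p)
    (hph : Integrable (fun x => p x * h x) μ) (hhc : ∀ᵐ x ∂μ, h x ≤ c) :
    ∫ x, p x * h x ∂μ ≤ c * ∫ x, p x ∂μ := by
  rw [← integral_const_mul]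
  refine integral_mono_ae hph (hp.const_mul c) ?_
  filter_upwards [hp₀, hhc] with x hpx hcx
  simpa only [mul_comm c] using mul_le_mul_of_nonneg_left hcx hpx

theorem integral_abs_div_integral_sub_mul_div_integral_le {α : Type*} [MeasurableSpace α]
    {μ : Measure α} {p h : α → ℝ} {a b : ℝ} (hp : Integrable p μ) (hp₀ : 0 ≤ᵐ[μ] p)
    (hp_pos : 0 < ∫ x, p x ∂μ) (hh : AEStronglyMeasurable h μ) (ha : 0 < a)
    (hab : ∀ᵐ x ∂μ, h x ∈ Set.Icc a b) :
    ∫ x, |p x / ∫ y, p y ∂μ - p x * h x / ∫ y, p y * h y ∂μ| ∂μ ≤ b / a - 1 := by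
  set N₁ := ∫ y, p y ∂μ
  set N₂ := ∫ y, p y * h y ∂μ
  have hph : Integrable (fun x => p x * h x) μ := by
    refine hp.mul_bdd hh (c := b) ?_
    filter_upwards [hab] with x ⟨hax, hxb⟩
    rwa [Real.norm_eq_abs, abs_of_pos (ha.trans_le hax)]
  have hN₂a : a * N₁ ≤ N₂ :=
    integral_le_integral_mul_of_le hp hp₀ hph (hab.mono fun _ hx => hx.1)
  have hN₂b : N₂ ≤ b * N₁ :=
    integral_mul_le_of_le hp hp₀ hph (hab.mono fun _ hx => hx.2)
  have hpointwise : ∀ᵐ x ∂μ, |p x / N₁ - p x * h x / N₂| ≤ (b / a - 1) * (p x / N₁) := by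
    filter_upwards [hp₀, hab] with x hpx ⟨hax, hxb⟩
    have hfactor : p x / N₁ - p x * h x / N₂ = p x / N₁ * (1 - h x * N₁ / N₂) := by
      field_simp
    rw [hfactor, abs_mul, abs_of_nonneg (div_nonneg hpx hp_pos.le), mul_comm]
    exact mul_le_mul_of_nonneg_right (abs_one_sub_mul_div_le ha hp_pos hax hxb hN₂a hN₂b)
      (div_nonneg hpx hp_pos.le)
  calc ∫ x, |p x / N₁ - p x * h x / N₂| ∂μ
      ≤ ∫ x, (b / a - 1) * (p x / N₁) ∂μ :=
        integral_mono_ae ((hp.div_const N₁).sub (hph.div_const N₂)).abs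
          ((hp.div_const N₁).const_mul _) hpointwise
    _ = b / a - 1 := by
        rw [integral_const_mul, integral_div, div_self hp_pos.ne', mul_one]

lemma integrableOn_exp_of_abs_le {α : Type*} [MeasurableSpace α] {μ : Measure α} {s : Set α}
    (hs : MeasurableSet s) (hμs : μ s ≠ ⊤) {f : α → ℝ} (hf : Measurable f) {B : ℝ}
    (hfB : ∀ z ∈ s, |f z| ≤ B) :
    IntegrableOn (fun z => Real.exp (f z)) s μ := by
  refine Measure.integrableOn_of_bounded hμs hf.exp.aestronglyMeasurable (M := Real.exp B) ?_
  filter_upwards [ae_restrict_mem hs] with z hz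
  rw [Real.norm_eq_abs, Real.abs_exp]
  exact Real.exp_le_exp.2 ((le_abs_self _).trans (hfB z hz))

/-- Stability of exponentially tilted (Gibbs) distributions: the total variation distance
between the Gibbs measures with densities proportional to `exp f` and `exp (f + g)` is at
most `(exp (2 B_g) − 1)/2`. -/
theorem gibbs_tv_stability
    (d : ℕ) (Z : Set (Fin d → ℝ)) (hZc : IsCompact Z) (hZv : 0 < volume Z)
    (f g : (Fin d → ℝ) → ℝ) (hf : Measurable f) (hg : Measurable g)
    (Bf Bg : ℝ) (hfb : ∀ z ∈ Z, |f z| ≤ Bf) (hgb : ∀ z ∈ Z, |g z| ≤ Bg) :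
    (1 / 2) * ∫ z in Z,
        |Real.exp (f z) / (∫ z' in Z, Real.exp (f z')) -
          Real.exp (f z + g z) / (∫ z' in Z, Real.exp (f z' + g z'))| ≤
      (Real.exp (2 * Bg) - 1) / 2 := by
  have hZm := hZc.measurableSet
  have : NeZero (volume.restrict Z) := ⟨by simpa [Measure.restrict_eq_zero] using hZv.ne'⟩
  have hint := integrableOn_exp_of_abs_le hZm (hZc.measure_lt_top (μ := volume)).ne hf hfb
  have hexp_g :
      ∀ᵐ z ∂volume.restrict Z, Real.exp (g z) ∈ Set.Icc (Real.exp (-Bg)) (Real.exp Bg) :=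
    ae_restrict_of_forall_mem hZm fun z hz =>
      ⟨Real.exp_le_exp.2 (neg_le_of_abs_le (hgb z hz)),
        Real.exp_le_exp.2 ((le_abs_self _).trans (hgb z hz))⟩
  have key := integral_abs_div_integral_sub_mul_div_integral_le hint
    (ae_of_all _ fun z => (Real.exp_pos (f z)).le) (integral_exp_pos hint)
    hg.exp.aestronglyMeasurable (Real.exp_pos _) hexp_g
  rw [← Real.exp_sub, sub_neg_eq_add, ← two_mul] at key
  simp only [Real.exp_add]
  linarith
end
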